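/- arXiv:2001.09343 — 4 statements merged into one kernel-verified Lean document; each statement's English description precedes it below -/
import Mathlib

section
/- Let H be a finite-dimensional real inner product space, let r > 0, and let μ, v ∈ H. Define f : H → ℝ by f(q) = ‖q‖ + ⟪μ, q⟫ + (r/2)‖q − v‖², and set w = r•v − μ. If ‖w‖ > 1, then the point q* = (1/r)·(1 − 1/‖w‖)•w is a global minimizer of f, i.e., f(q) ≥ f(q*) for all q ∈ H. -/
/-!
Expanding the square turns `f q` into `‖q‖ - ⟪w, q⟫ + (r/2)‖q‖² + (r/2)‖v‖²`. By Cauchy–Schwarz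
this is at least `φ(‖q‖) + (r/2)‖v‖²` with the scalar quadratic `φ(t) = (1 - ‖w‖) t + (r/2) t²`,
whose minimum `-(‖w‖ - 1)²/(2r)` is attained at `t = (‖w‖ - 1)/r`. The point `q*` is the vector of
that length in the direction of `w`, where Cauchy–Schwarz is an equality, so `f q*` attains the bound.
-/

section

variable {H : Type*} [NormedAddCommGroup H] [InnerProductSpace ℝ H]

theorem norm_add_inner_add_mul_norm_sub_sq_eq (r : ℝ) (μ v q : H) :
    ‖q‖ + inner ℝ μ q + r / 2 * ‖q - v‖ ^ 2
      = ‖q‖ - inner ℝ (r • v - μ) q + r / 2 * ‖q‖ ^ 2 + r / 2 * ‖v‖ ^ 2 := by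
  rw [norm_sub_sq_real, inner_sub_left, real_inner_smul_left, real_inner_comm q v]
  ring

theorem neg_sq_div_le_sub_mul_add_mul_sq {r : ℝ} (hr : 0 < r) (a t : ℝ) :
    -(a - 1) ^ 2 / (2 * r) ≤ t - a * t + r / 2 * t ^ 2 := by
  rw [div_le_iff₀ (by positivity)]
  nlinarith [sq_nonneg (r * t - (a - 1))]

theorem neg_sq_div_le_norm_sub_inner_add_mul_sq {r : ℝ} (hr : 0 < r) (w q : H) :
    -(‖w‖ - 1) ^ 2 / (2 * r) ≤ ‖q‖ - inner ℝ w q + r / 2 * ‖q‖ ^ 2 := by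
  have hcs : inner ℝ w q ≤ ‖w‖ * ‖q‖ := real_inner_le_norm w q
  linarith [neg_sq_div_le_sub_mul_add_mul_sq hr ‖w‖ ‖q‖]

theorem norm_sub_inner_add_mul_sq_smul_eq {r : ℝ} (hr : 0 < r) {w : H} (hw : 1 ≤ ‖w‖) :
    let q := ((1 / r) * (1 - 1 / ‖w‖)) • w
    ‖q‖ - inner ℝ w q + r / 2 * ‖q‖ ^ 2 = -(‖w‖ - 1) ^ 2 / (2 * r) := by
  have hw0 : 0 < ‖w‖ := one_pos.trans_le hw
  have hc : 0 ≤ (1 / r) * (1 - 1 / ‖w‖) :=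
    mul_nonneg (by positivity) (sub_nonneg.2 ((div_le_one hw0).2 hw))
  simp only [norm_smul, Real.norm_eq_abs, abs_of_nonneg hc, real_inner_smul_right,
    real_inner_self_eq_norm_sq]
  field_simp
  ring

end

theorem soft_thresholding_minimizer_general
    {H : Type*} [NormedAddCommGroup H] [InnerProductSpace ℝ H]
    (r : ℝ) (hr : 0 < r) (μ v : H)
    (f : H → ℝ) (hf : ∀ q : H, f q = ‖q‖ + (inner ℝ μ q : ℝ) + (r / 2) * ‖q - v‖ ^ 2)
    (w : H) (hw : w = r • v - μ) (hnorm : 1 < ‖w‖) :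
    ∀ q : H, f q ≥ f (((1 / r) * (1 - 1 / ‖w‖)) • w) := by
  intro q
  rw [hf, hf, norm_add_inner_add_mul_norm_sub_sq_eq, norm_add_inner_add_mul_norm_sub_sq_eq, ← hw]
  linarith [neg_sq_div_le_norm_sub_inner_add_mul_sq hr w q,
    norm_sub_inner_add_mul_sq_smul_eq hr hnorm.le]

/-- Soft-thresholding solution of the q-subproblem (case ‖w‖ > 1):
the point q* = (1/r)·(1 − 1/‖w‖)•w is a global minimizer of
f(q) = ‖q‖ + ⟪μ, q⟫ + (r/2)‖q − v‖², where w = r•v − μ. -/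
theorem soft_thresholding_minimizer
    {H : Type*} [NormedAddCommGroup H] [InnerProductSpace ℝ H] [FiniteDimensional ℝ H]
    (r : ℝ) (hr : 0 < r) (μ v : H)
    (f : H → ℝ) (hf : ∀ q : H, f q = ‖q‖ + (inner ℝ μ q : ℝ) + (r / 2) * ‖q - v‖ ^ 2)
    (w : H) (hw : w = r • v - μ) (hnorm : 1 < ‖w‖) :
    ∀ q : H, f q ≥ f (((1 / r) * (1 - 1 / ‖w‖)) • w) :=
  soft_thresholding_minimizer_general r hr μ v f hf w hw hnorm
end

section
/- Let H be a finite-dimensional real inner product space, let r > 0, and let μ, v ∈ H. Define f : H → ℝ by f(q) = ‖q‖ + ⟪μ, q⟫ + (r/2)‖q − v‖², and set w = r•v − μ. If ‖w‖ > 1, then the minimizer of f is unique: any q ∈ H with f(q) ≤ f(q') for all q' ∈ H must equal (1/r)·(1 − 1/‖w‖)•w. -/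
/-!
Expanding the square, `f q = ‖q‖ - ⟪w, q⟫ + (r/2)‖q‖² + (r/2)‖v‖²`. With `s = (‖w‖ - 1)/r`, completing
the square in `‖q‖` gives
`‖q‖ - ⟪w, q⟫ + (r/2)‖q‖² = (r/2)(‖q‖ - s)² + (‖w‖‖q‖ - ⟪w, q⟫) - (r/2)s²`,
a sum of two nonnegative terms (the second by Cauchy–Schwarz) minus a constant. The candidate
`q₀ = (s/‖w‖) • w` makes both terms vanish, so a minimizer must make them vanish too: `‖q‖ = s`, and
equality in Cauchy–Schwarz forces `q` to be a nonnegative multiple of `w`, i.e. `q = q₀`.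
-/

open RealInnerProductSpace

section SoftThreshold

variable {H : Type*} [NormedAddCommGroup H] [InnerProductSpace ℝ H]

noncomputable def softThreshold (r : ℝ) (w : H) : H := ((1 / r) * (1 - 1 / ‖w‖)) • w

noncomputable def softThresholdObjective (r : ℝ) (w q : H) : ℝ := ‖q‖ - ⟪w, q⟫ + r / 2 * ‖q‖ ^ 2

theorem norm_add_inner_add_half_mul_norm_sub_sq (r : ℝ) (μ v q : H) :
    ‖q‖ + ⟪μ, q⟫ + r / 2 * ‖q - v‖ ^ 2
      = softThresholdObjective r (r • v - μ) q + r / 2 * ‖v‖ ^ 2 := by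
  rw [softThresholdObjective, norm_sub_sq_real, inner_sub_left, real_inner_smul_left,
    real_inner_comm v]
  ring

theorem softThresholdObjective_eq {r : ℝ} (hr : r ≠ 0) (w q : H) :
    softThresholdObjective r w q
      = r / 2 * (‖q‖ - (‖w‖ - 1) / r) ^ 2 + (‖w‖ * ‖q‖ - ⟪w, q⟫)
        - r / 2 * ((‖w‖ - 1) / r) ^ 2 := by
  rw [softThresholdObjective]
  field_simp
  ring

theorem norm_softThreshold {r : ℝ} (hr : 0 < r) {w : H} (hw : 1 ≤ ‖w‖) :
    ‖softThreshold r w‖ = (‖w‖ - 1) / r := by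
  have hw₀ : ‖w‖ ≠ 0 := by positivity
  have hcoef : 0 ≤ 1 / r * (1 - 1 / ‖w‖) :=
    mul_nonneg (by positivity) (sub_nonneg.mpr ((div_le_one (by positivity)).mpr hw))
  rw [softThreshold, norm_smul, Real.norm_of_nonneg hcoef]
  field_simp

theorem inner_softThreshold {r : ℝ} (hr : 0 < r) {w : H} (hw : 1 ≤ ‖w‖) :
    ⟪w, softThreshold r w⟫ = ‖w‖ * ‖softThreshold r w‖ := by
  have hw₀ : ‖w‖ ≠ 0 := by positivity
  rw [norm_softThreshold hr hw, softThreshold, real_inner_smul_right, real_inner_self_eq_norm_sq]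
  field_simp

theorem softThresholdObjective_softThreshold {r : ℝ} (hr : 0 < r) {w : H} (hw : 1 ≤ ‖w‖) :
    softThresholdObjective r w (softThreshold r w) = -(r / 2 * ((‖w‖ - 1) / r) ^ 2) := by
  rw [softThresholdObjective_eq hr.ne', inner_softThreshold hr hw, norm_softThreshold hr hw]
  ring

theorem eq_softThreshold_of_softThresholdObjective_le {r : ℝ} (hr : 0 < r) {w : H} (hw : w ≠ 0)
    {q : H} (hq : softThresholdObjective r w q ≤ -(r / 2 * ((‖w‖ - 1) / r) ^ 2)) :
    q = softThreshold r w := by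
  have hw₀ : ‖w‖ ≠ 0 := norm_ne_zero_iff.mpr hw
  rw [softThresholdObjective_eq hr.ne'] at hq
  have hcs : ⟪w, q⟫ ≤ ‖w‖ * ‖q‖ := real_inner_le_norm w q
  have hsq : 0 ≤ r / 2 * (‖q‖ - (‖w‖ - 1) / r) ^ 2 := by positivity
  have hnorm : ‖q‖ = (‖w‖ - 1) / r := by
    have : r / 2 * (‖q‖ - (‖w‖ - 1) / r) ^ 2 = 0 := by linarith
    simpa [hr.ne', sub_eq_zero] using this
  have hparallel : ‖q‖ • w = ‖w‖ • q := inner_eq_norm_mul_iff_real.mp (by linarith)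
  calc q = (‖q‖ / ‖w‖) • w := by rw [div_eq_inv_mul, mul_smul, hparallel, inv_smul_smul₀ hw₀]
    _ = softThreshold r w := by rw [softThreshold, hnorm]; congr 1; field_simp

end SoftThreshold

theorem soft_thresholding_minimizer_unique_general
    {H : Type*} [NormedAddCommGroup H] [InnerProductSpace ℝ H]
    (r : ℝ) (hr : 0 < r) (μ v : H)
    (f : H → ℝ) (hf : ∀ q : H, f q = ‖q‖ + (inner ℝ μ q : ℝ) + (r / 2) * ‖q - v‖ ^ 2)
    (w : H) (hw : w = r • v - μ) (hnorm : 1 < ‖w‖) :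
    ∀ q : H, (∀ q' : H, f q ≤ f q') → q = ((1 / r) * (1 - 1 / ‖w‖)) • w := by
  intro q hq
  have hle := hq (softThreshold r w)
  rw [hf, hf, norm_add_inner_add_half_mul_norm_sub_sq, norm_add_inner_add_half_mul_norm_sub_sq,
    ← hw, softThresholdObjective_softThreshold hr hnorm.le, add_le_add_iff_right] at hle
  exact eq_softThreshold_of_softThresholdObjective_le hr
    (norm_pos_iff.mp (one_pos.trans hnorm)) hle

/-- Uniqueness of the soft-thresholding minimizer (case ‖w‖ > 1): any global
minimizer of f(q) = ‖q‖ + ⟪μ, q⟫ + (r/2)‖q − v‖² equals (1/r)·(1 − 1/‖w‖)•w,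
where w = r•v − μ. -/
theorem soft_thresholding_minimizer_unique
    {H : Type*} [NormedAddCommGroup H] [InnerProductSpace ℝ H] [FiniteDimensional ℝ H]
    (r : ℝ) (hr : 0 < r) (μ v : H)
    (f : H → ℝ) (hf : ∀ q : H, f q = ‖q‖ + (inner ℝ μ q : ℝ) + (r / 2) * ‖q - v‖ ^ 2)
    (w : H) (hw : w = r • v - μ) (hnorm : 1 < ‖w‖) :
    ∀ q : H, (∀ q' : H, f q ≤ f q') → q = ((1 / r) * (1 - 1 / ‖w‖)) • w :=
  soft_thresholding_minimizer_unique_general r hr μ v f hf w hw hnorm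
end

section
/- Let H be a finite-dimensional real inner product space, let r > 0, and let μ, v ∈ H. Define f : H → ℝ by f(q) = ‖q‖ + ⟪μ, q⟫ + (r/2)‖q − v‖². A nonzero point q ∈ H is a global minimizer of f if and only if (1/‖q‖)•q + μ + r•(q − v) = 0. -/
/-!
The objective is the sum of the norm, a linear term and a convex quadratic. At `q ≠ 0` it is
differentiable with gradient `g = ‖q‖⁻¹ • q + μ + r • (q - v)`, so a minimizer has `g = 0` by
Fermat's rule. Conversely, Cauchy–Schwarz makes `g` a subgradient,
`f q' ≥ f q + ⟪g, q' - q⟫`, so `g = 0` forces `q` to be a global minimizer.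
-/

open scoped RealInnerProductSpace

section

variable {E : Type*} [NormedAddCommGroup E] [InnerProductSpace ℝ E]

theorem hasFDerivAt_norm_of_ne_zero {x : E} (hx : x ≠ 0) :
    HasFDerivAt (‖·‖) (‖x‖⁻¹ • innerSL ℝ x) x := by
  have hsq : ‖x‖ ^ 2 ≠ 0 := by positivity
  convert (hasStrictFDerivAt_norm_sq x).hasFDerivAt.sqrt hsq using 1
  · exact funext fun y ↦ (Real.sqrt_sq (norm_nonneg y)).symm
  · rw [Real.sqrt_sq (norm_nonneg x)]
    module

theorem norm_add_inner_inv_norm_smul_sub_le (x y : E) :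
    ‖x‖ + ⟪‖x‖⁻¹ • x, y - x⟫ ≤ ‖y‖ := by
  rcases eq_or_ne x 0 with rfl | hx
  · simp
  rw [real_inner_smul_left, inner_sub_right, real_inner_self_eq_norm_sq]
  calc ‖x‖ + ‖x‖⁻¹ * (⟪x, y⟫ - ‖x‖ ^ 2) = ‖x‖⁻¹ * ⟪x, y⟫ := by field_simp; ring
    _ ≤ ‖x‖⁻¹ * (‖x‖ * ‖y‖) := by gcongr; exact real_inner_le_norm x y
    _ = ‖y‖ := by field_simp

variable (r : ℝ) (μ v : E)

noncomputable def qObjective (q : E) : ℝ := ‖q‖ + ⟪μ, q⟫ + (r / 2) * ‖q - v‖ ^ 2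

/-- At `q = 0` the junk value `‖0‖⁻¹ = 0` picks the subgradient `0` of the norm. -/
noncomputable def qGradient (q : E) : E := ‖q‖⁻¹ • q + μ + r • (q - v)

theorem hasFDerivAt_qObjective {q : E} (hq : q ≠ 0) :
    HasFDerivAt (qObjective r μ v) (innerSL ℝ (qGradient r μ v q)) q := by
  have hquad := ((hasFDerivAt_id q).sub_const v).norm_sq.const_mul (r / 2)
  have hsum := ((hasFDerivAt_norm_of_ne_zero hq).add (innerSL ℝ μ).hasFDerivAt).add hquad
  refine hsum.congr_fderiv ?_
  simp only [qGradient, map_add, map_smul, map_sub, ContinuousLinearMap.comp_id, id_eq]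
  module

theorem qObjective_add_inner_qGradient_le (hr : 0 ≤ r) (q q' : E) :
    qObjective r μ v q + ⟪qGradient r μ v q, q' - q⟫ ≤ qObjective r μ v q' := by
  have hnorm := norm_add_inner_inv_norm_smul_sub_le q q'
  have hsq : ‖q' - v‖ ^ 2 = ‖q - v‖ ^ 2 + 2 * ⟪q - v, q' - q⟫ + ‖q' - q‖ ^ 2 := by
    rw [← norm_add_sq_real, sub_add_sub_cancel']
  simp only [qObjective, qGradient, inner_add_left, real_inner_smul_left] at hnorm ⊢
  rw [hsq]
  linarith [inner_sub_right (𝕜 := ℝ) μ q' q, mul_nonneg hr (sq_nonneg ‖q' - q‖)]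

end

theorem q_subproblem_optimality_nonzero_general
    {H : Type*} [NormedAddCommGroup H] [InnerProductSpace ℝ H]
    (r : ℝ) (hr : 0 < r) (μ v : H)
    (f : H → ℝ) (hf : ∀ q : H, f q = ‖q‖ + (inner ℝ μ q : ℝ) + (r / 2) * ‖q - v‖ ^ 2)
    (q : H) (hq : q ≠ 0) :
    (∀ q' : H, f q' ≥ f q) ↔ (1 / ‖q‖) • q + μ + r • (q - v) = 0 := by
  obtain rfl : f = qObjective r μ v := funext hf
  rw [one_div, ← qGradient]
  constructor
  · intro hmin
    have hzero := IsLocalMin.hasFDerivAt_eq_zero (Filter.Eventually.of_forall hmin)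
      (hasFDerivAt_qObjective r μ v hq)
    simpa using congr($hzero (qGradient r μ v q))
  · intro hgrad q'
    simpa [hgrad] using qObjective_add_inner_qGradient_le r μ v hr.le q q'

/-- First-order optimality condition at a nonzero point for the q-subproblem:
a nonzero q is a global minimizer of f(q) = ‖q‖ + ⟪μ, q⟫ + (r/2)‖q − v‖²
iff (1/‖q‖)•q + μ + r•(q − v) = 0. -/
theorem q_subproblem_optimality_nonzero
    {H : Type*} [NormedAddCommGroup H] [InnerProductSpace ℝ H] [FiniteDimensional ℝ H]
    (r : ℝ) (hr : 0 < r) (μ v : H)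
    (f : H → ℝ) (hf : ∀ q : H, f q = ‖q‖ + (inner ℝ μ q : ℝ) + (r / 2) * ‖q - v‖ ^ 2)
    (q : H) (hq : q ≠ 0) :
    (∀ q' : H, f q' ≥ f q) ↔ (1 / ‖q‖) • q + μ + r • (q - v) = 0 :=
  q_subproblem_optimality_nonzero_general r hr μ v f hf q hq
end

section
/- Let H be a finite-dimensional real inner product space, let r > 0, and let μ, v ∈ H with w = r•v − μ ≠ 0. Then every global minimizer q of f(q) = ‖q‖ + ⟪μ, q⟫ + (r/2)‖q − v‖² lies on the nonnegative ray spanned by w: there exists t ≥ 0 such that q = t•w. -/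
open RealInnerProductSpace

section

variable {E : Type*} [NormedAddCommGroup E] [InnerProductSpace ℝ E]

theorem inner_add_half_mul_norm_sub_sq (r : ℝ) (μ v x : E) :
    ⟪μ, x⟫ + r / 2 * ‖x - v‖ ^ 2 = r / 2 * (‖x‖ ^ 2 + ‖v‖ ^ 2) - ⟪r • v - μ, x⟫ := by
  rw [norm_sub_sq_real, inner_sub_left, real_inner_smul_left, real_inner_comm v x]
  ring

/-- Among vectors of a given norm, `⟪w, ·⟫` is maximal exactly on the ray of `w` (equality case of
Cauchy–Schwarz), so comparing `q` with the vector of its norm on that ray forces `q` onto it. -/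
theorem exists_nonneg_smul_eq_of_radial_sub_inner_le {g : ℝ → ℝ} {w q : E} (hw : w ≠ 0)
    (hq : ∀ x, g ‖q‖ - ⟪w, q⟫ ≤ g ‖x‖ - ⟪w, x⟫) : ∃ t : ℝ, 0 ≤ t ∧ q = t • w := by
  have hw' : ‖w‖ ≠ 0 := norm_ne_zero_iff.mpr hw
  set t := ‖q‖ / ‖w‖
  have hnorm : ‖t • w‖ = ‖q‖ := by
    rw [norm_smul, Real.norm_of_nonneg (by positivity), div_mul_cancel₀ _ hw']
  have hinner : ⟪w, t • w⟫ = ‖w‖ * ‖q‖ := by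
    rw [real_inner_smul_right, real_inner_self_eq_norm_sq, sq, ← mul_assoc, div_mul_cancel₀ _ hw',
      mul_comm]
  have hle : ‖w‖ * ‖q‖ ≤ ⟪w, q⟫ := by
    have := hq (t • w)
    rw [hnorm, hinner] at this
    linarith
  have heq : ⟪w, q⟫ = ‖w‖ * ‖q‖ := le_antisymm (real_inner_le_norm w q) hle
  exact ⟨t, by positivity, ((inner_eq_norm_mul_iff_div hw).mp heq).symm⟩

end

theorem q_subproblem_minimizer_aligned_general
    {H : Type*} [NormedAddCommGroup H] [InnerProductSpace ℝ H]
    (r : ℝ) (μ v : H)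
    (f : H → ℝ) (hf : ∀ q : H, f q = ‖q‖ + (inner ℝ μ q : ℝ) + (r / 2) * ‖q - v‖ ^ 2)
    (w : H) (hw : w = r • v - μ) (hw0 : w ≠ 0) :
    ∀ q : H, (∀ q' : H, f q ≤ f q') → ∃ t : ℝ, 0 ≤ t ∧ q = t • w := by
  intro q hq
  have hradial : ∀ x, f x = (‖x‖ + r / 2 * (‖x‖ ^ 2 + ‖v‖ ^ 2)) - ⟪w, x⟫ := fun x => by
    rw [hf, add_assoc, inner_add_half_mul_norm_sub_sq, hw]
    ring
  exact exists_nonneg_smul_eq_of_radial_sub_inner_le (g := fun s => s + r / 2 * (s ^ 2 + ‖v‖ ^ 2))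
    hw0 fun x => by simpa only [hradial] using hq x

/-- Alignment lemma: if w = r•v − μ ≠ 0, then every global minimizer of
f(q) = ‖q‖ + ⟪μ, q⟫ + (r/2)‖q − v‖² lies on the nonnegative ray spanned by w. -/
theorem q_subproblem_minimizer_aligned
    {H : Type*} [NormedAddCommGroup H] [InnerProductSpace ℝ H] [FiniteDimensional ℝ H]
    (r : ℝ) (hr : 0 < r) (μ v : H)
    (f : H → ℝ) (hf : ∀ q : H, f q = ‖q‖ + (inner ℝ μ q : ℝ) + (r / 2) * ‖q - v‖ ^ 2)
    (w : H) (hw : w = r • v - μ) (hw0 : w ≠ 0) :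
    ∀ q : H, (∀ q' : H, f q ≤ f q') → ∃ t : ℝ, 0 ≤ t ∧ q = t • w :=
  q_subproblem_minimizer_aligned_general r μ v f hf w hw hw0
end
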